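/- Along a trajectory z(t) in Δ_n of the replicator-type dynamics ż_i = z_i g_i(z), the time derivative of f ∘ z vanishes at time t if and only if ż(t) = 0, i.e., z_i(t)·(∂f/∂z_i(z(t)) − μ(t)) = 0 for all i, where μ(t) = Σ_k z_k(t) ∂f/∂z_k(z(t)). -/

import Mathlib

open Real BigOperators Finset

noncomputable def pd {n : ℕ} (f : (Fin n → ℝ) → ℝ) (z : Fin n → ℝ) (i : Fin n) : ℝ :=
  fderiv ℝ f z (Pi.single i 1)

/-! By the chain rule `d = ∑ ż_i ∂_i f = ∑ z_i (∂_i f - μ) ∂_i f`. Since `∑ z_i (∂_i f - μ) = 0`,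
this is the `z`-weighted variance `∑ z_i (∂_i f - μ)²` of the partial derivatives, a sum of
nonnegative terms, which vanishes iff every `z_i (∂_i f - μ)` does. -/

theorem fderiv_apply_eq_sum_mul_pd {n : ℕ} (f : (Fin n → ℝ) → ℝ) (x v : Fin n → ℝ) :
    fderiv ℝ f x v = ∑ i, v i * pd f x i := by
  conv_lhs => rw [← Finset.univ_sum_single v]
  simp only [map_sum, pd]
  refine Finset.sum_congr rfl fun i _ => ?_
  rw [← smul_eq_mul, ← map_smul, ← Pi.single_smul, smul_eq_mul, mul_one]

theorem HasDerivAt.comp_eq_sum_mul_pd {n : ℕ} {f : (Fin n → ℝ) → ℝ} {z : ℝ → Fin n → ℝ}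
    {v : Fin n → ℝ} {t : ℝ} (hf : DifferentiableAt ℝ f (z t)) (hz : HasDerivAt z v t) :
    HasDerivAt (fun s => f (z s)) (∑ i, v i * pd f (z t) i) t := by
  rw [← fderiv_apply_eq_sum_mul_pd]
  exact hf.hasFDerivAt.comp_hasDerivAt t hz

theorem sum_mul_sub_weighted_mean_mul_self {ι : Type*} [Fintype ι] (w p : ι → ℝ)
    (hw : ∑ i, w i = 1) :
    ∑ i, w i * (p i - ∑ k, w k * p k) * p i = ∑ i, w i * (p i - ∑ k, w k * p k) ^ 2 := by
  set μ := ∑ k, w k * p k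
  have hcentered : ∑ i, w i * (p i - μ) = 0 := by
    simp only [mul_sub, Finset.sum_sub_distrib, ← Finset.sum_mul, hw, one_mul, μ, sub_self]
  calc ∑ i, w i * (p i - μ) * p i
      = ∑ i, w i * (p i - μ) ^ 2 + (∑ i, w i * (p i - μ)) * μ := by
        rw [Finset.sum_mul, ← Finset.sum_add_distrib]
        exact Finset.sum_congr rfl fun i _ => by ring
    _ = ∑ i, w i * (p i - μ) ^ 2 := by rw [hcentered, zero_mul, add_zero]

theorem sum_mul_sq_eq_zero_iff {ι : Type*} [Fintype ι] {w a : ι → ℝ} (hw : ∀ i, 0 ≤ w i) :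
    ∑ i, w i * a i ^ 2 = 0 ↔ ∀ i, w i * a i = 0 := by
  rw [Finset.sum_eq_zero_iff_of_nonneg fun i _ => mul_nonneg (hw i) (sq_nonneg _)]
  refine forall_congr' fun i => ?_
  simp only [Finset.mem_univ, true_implies, mul_eq_zero, pow_eq_zero_iff two_ne_zero]

theorem stmt2 {n : ℕ} (Ω : Set (Fin n → ℝ)) (hΩ : IsOpen Ω)
    (hsub : stdSimplex ℝ (Fin n) ⊆ Ω) (f : (Fin n → ℝ) → ℝ)
    (hf : ContDiffOn ℝ 1 f Ω)
    (z : ℝ → Fin n → ℝ) (hmem : ∀ t, z t ∈ stdSimplex ℝ (Fin n))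
    (hode : ∀ t i, HasDerivAt (fun s => z s i)
      (z t i * (pd f (z t) i - ∑ k, z t k * pd f (z t) k)) t)
    (t : ℝ) (d : ℝ) (hd : HasDerivAt (fun s => f (z s)) d t) :
    d = 0 ↔ ∀ i, z t i * (pd f (z t) i - ∑ k, z t k * pd f (z t) k) = 0 := by
  have hdiff : DifferentiableAt ℝ f (z t) :=
    (hf.contDiffAt (hΩ.mem_nhds (hsub (hmem t)))).differentiableAt one_ne_zero
  have hchain := (hasDerivAt_pi.mpr (hode t)).comp_eq_sum_mul_pd hdiff
  rw [hd.unique hchain, sum_mul_sub_weighted_mean_mul_self _ _ (hmem t).2,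
    sum_mul_sq_eq_zero_iff (hmem t).1]
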